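/- arXiv:2602.00797 — 4 statements merged into one kernel-verified Lean document; each statement's English description precedes it below -/
import Mathlib

section
/- Let X and X' be independent, identically distributed integrable random vectors in R^d. Then the conditional expectation E[X' - X | X + X' ] equals 0 almost surely. -/
/-!
If `ν` is the common law of `X` and `X'`, independence makes `ν ⊗ ν` the law of `(X, X')`, and
this law is invariant under swapping the coordinates. The σ-algebra generated by `X + X'` consists
of preimages under `(X, X')` of swap-invariant sets, so `X` and `X'` have the same integral over
each of its sets, whence `E[X' | X + X'] = E[X | X + X']`.
-/

open MeasureTheory ProbabilityTheory

section Exchangeable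

variable {Ω E : Type*} {mΩ : MeasurableSpace Ω} {μ : Measure Ω} [MeasurableSpace E]
  {X Y : Ω → E}

lemma ProbabilityTheory.IndepFun.map_prodMk_swap_eq [IsFiniteMeasure μ] (hX : AEMeasurable X μ)
    (hY : AEMeasurable Y μ) (hXY : IndepFun X Y μ) (hident : μ.map X = μ.map Y) :
    μ.map (fun ω => (Y ω, X ω)) = μ.map (fun ω => (X ω, Y ω)) := by
  rw [hXY.symm.map_prod_eq_prod_map_map hY hX, hXY.map_prod_eq_prod_map_map hX hY, hident]

variable [NormedAddCommGroup E] [NormedSpace ℝ E] [BorelSpace E] [SecondCountableTopology E]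

lemma setIntegral_preimage_snd_eq_fst_of_map_swap_eq (hX : Measurable X) (hY : Measurable Y)
    (hswap : μ.map (fun ω => (Y ω, X ω)) = μ.map (fun ω => (X ω, Y ω)))
    {A : Set (E × E)} (hA : MeasurableSet A) (hA_swap : Prod.swap ⁻¹' A = A) :
    ∫ ω in (fun ω => (X ω, Y ω)) ⁻¹' A, Y ω ∂μ =
      ∫ ω in (fun ω => (X ω, Y ω)) ⁻¹' A, X ω ∂μ := by
  have hpreimage : (fun ω => (Y ω, X ω)) ⁻¹' A = (fun ω => (X ω, Y ω)) ⁻¹' A :=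
    congrArg ((fun ω => (X ω, Y ω)) ⁻¹' ·) hA_swap
  calc ∫ ω in (fun ω => (X ω, Y ω)) ⁻¹' A, Y ω ∂μ
      = ∫ p in A, p.2 ∂μ.map (fun ω => (X ω, Y ω)) :=
        (setIntegral_map hA measurable_snd.aestronglyMeasurable
          (hX.prodMk hY).aemeasurable).symm
    _ = ∫ p in A, p.2 ∂μ.map (fun ω => (Y ω, X ω)) := by rw [hswap]
    _ = ∫ ω in (fun ω => (X ω, Y ω)) ⁻¹' A, X ω ∂μ := by
        rw [setIntegral_map hA measurable_snd.aestronglyMeasurable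
          (hY.prodMk hX).aemeasurable, hpreimage]

variable [CompleteSpace E] [IsFiniteMeasure μ] {G : Type*} [MeasurableSpace G]

lemma condExp_snd_ae_eq_condExp_fst_of_map_swap_eq (hX : Measurable X) (hY : Measurable Y)
    (hXi : Integrable X μ) (hYi : Integrable Y μ)
    (hswap : μ.map (fun ω => (Y ω, X ω)) = μ.map (fun ω => (X ω, Y ω)))
    {f : E × E → G} (hf : Measurable f) (hf_swap : f ∘ Prod.swap = f) :
    μ[Y | MeasurableSpace.comap (fun ω => f (X ω, Y ω)) inferInstance]
      =ᵐ[μ] μ[X | MeasurableSpace.comap (fun ω => f (X ω, Y ω)) inferInstance] := by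
  have hm : MeasurableSpace.comap (fun ω => f (X ω, Y ω)) inferInstance ≤ mΩ :=
    (hf.comp (hX.prodMk hY)).comap_le
  refine ae_eq_condExp_of_forall_setIntegral_eq hm hXi
    (fun s _ _ => integrable_condExp.integrableOn) ?_
    stronglyMeasurable_condExp.aestronglyMeasurable
  rintro _ ⟨B, hB, rfl⟩ -
  rw [setIntegral_condExp hm hYi ⟨B, hB, rfl⟩]
  refine setIntegral_preimage_snd_eq_fst_of_map_swap_eq hX hY hswap (hf hB) ?_
  rw [← Set.preimage_comp, hf_swap]

end Exchangeable

/-- If `X, X'` are iid integrable random vectors in `ℝ^d`, then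
`E[X' - X | X + X'] = 0` almost surely. -/
theorem zero_flow_midpoint {Ω : Type*} [MeasurableSpace Ω] (μ : Measure Ω)
    [IsProbabilityMeasure μ] {d : ℕ} (X X' : Ω → (Fin d → ℝ))
    (hX : Measurable X) (hX' : Measurable X')
    (hXint : Integrable X μ) (hX'int : Integrable X' μ)
    (hindep : IndepFun X X' μ)
    (hident : μ.map X = μ.map X') :
    μ[(fun ω => X' ω - X ω) |
      MeasurableSpace.comap (fun ω => X ω + X' ω) inferInstance] =ᵐ[μ] 0 := by
  have hswap := hindep.map_prodMk_swap_eq hX.aemeasurable hX'.aemeasurable hident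
  have hsum_swap : (fun p : (Fin d → ℝ) × (Fin d → ℝ) => p.1 + p.2) ∘ Prod.swap =
      fun p => p.1 + p.2 := funext fun p => add_comm p.2 p.1
  set m := MeasurableSpace.comap (fun ω => X ω + X' ω) inferInstance
  have hcondExp_eq : μ[X' | m] =ᵐ[μ] μ[X | m] :=
    condExp_snd_ae_eq_condExp_fst_of_map_swap_eq hX hX' hXint hX'int hswap
      (measurable_fst.add measurable_snd) hsum_swap
  filter_upwards [condExp_sub hX'int hXint m, hcondExp_eq] with ω hsub heq
  exact hsub.trans (sub_eq_zero_of_eq heq)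
end

section
/- Let X0 and X1 be independent integrable real random variables. If E[(X1 - X0) h(X0 + X1)] = 0 for every bounded measurable function h: R -> C, then for every real t, E[X1 e^{it X1}] E[e^{it X0}] = E[X0 e^{it X0}] E[e^{it X1}]. -/
/-!
Take `h = e_t`, `e_t(x) = exp(itx)`, in the orthogonality hypothesis. Since `e_t` is a character,
`(X1 - X0) e_t(X0 + X1) = X1 e_t(X1) e_t(X0) - X0 e_t(X0) e_t(X1)`, and independence factors the
expectation of each product, so the hypothesis becomes the claimed identity.
-/

open MeasureTheory ProbabilityTheory

section BoundedCharacter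

variable {Ω : Type*} [MeasurableSpace Ω] {μ : Measure Ω} {e : ℝ → ℂ} {C : ℝ}

lemma MeasureTheory.Integrable.ofReal_mul_comp_of_norm_le {X : Ω → ℝ} (hX : Integrable X μ)
    (he : Measurable e) (hC : ∀ x, ‖e x‖ ≤ C) :
    Integrable (fun ω ↦ (X ω : ℂ) * e (X ω)) μ :=
  hX.ofReal.mul_bdd (he.comp_aemeasurable hX.aemeasurable).aestronglyMeasurable
    (.of_forall fun ω ↦ hC (X ω))

lemma MeasureTheory.integrable_comp_of_norm_le [IsFiniteMeasure μ] {X : Ω → ℝ} (hX : AEMeasurable X μ)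
    (he : Measurable e) (hC : ∀ x, ‖e x‖ ≤ C) :
    Integrable (fun ω ↦ e (X ω)) μ :=
  .of_bound (he.comp_aemeasurable hX).aestronglyMeasurable C (.of_forall fun ω ↦ hC (X ω))

lemma ProbabilityTheory.IndepFun.integral_ofReal_mul_comp_mul_comp {X Y : Ω → ℝ} (hXY : IndepFun X Y μ)
    (hX : AEMeasurable X μ) (hY : AEMeasurable Y μ) (he : Measurable e) :
    ∫ ω, (X ω : ℂ) * e (X ω) * e (Y ω) ∂μ =
      (∫ ω, (X ω : ℂ) * e (X ω) ∂μ) * ∫ ω, e (Y ω) ∂μ :=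
  (hXY.comp (Complex.measurable_ofReal.mul he) he).integral_fun_mul_eq_mul_integral
    ((Complex.measurable_ofReal.mul he).comp_aemeasurable hX).aestronglyMeasurable
    (he.comp_aemeasurable hY).aestronglyMeasurable

theorem ProbabilityTheory.IndepFun.integral_sub_mul_comp_add [IsFiniteMeasure μ] {X Y : Ω → ℝ}
    (hXY : IndepFun X Y μ) (hX : Integrable X μ) (hY : Integrable Y μ)
    (he : Measurable e) (hC : ∀ x, ‖e x‖ ≤ C) (he_add : ∀ x y, e (x + y) = e x * e y) :
    ∫ ω, ((Y ω : ℂ) - X ω) * e (X ω + Y ω) ∂μ =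
      (∫ ω, (Y ω : ℂ) * e (Y ω) ∂μ) * (∫ ω, e (X ω) ∂μ) -
        (∫ ω, (X ω : ℂ) * e (X ω) ∂μ) * ∫ ω, e (Y ω) ∂μ := by
  have hYX : Integrable (fun ω ↦ (Y ω : ℂ) * e (Y ω) * e (X ω)) μ :=
    (hXY.symm.comp (Complex.measurable_ofReal.mul he) he).integrable_mul
      (hY.ofReal_mul_comp_of_norm_le he hC) (integrable_comp_of_norm_le hX.aemeasurable he hC)
  have hXY' : Integrable (fun ω ↦ (X ω : ℂ) * e (X ω) * e (Y ω)) μ :=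
    (hXY.comp (Complex.measurable_ofReal.mul he) he).integrable_mul
      (hX.ofReal_mul_comp_of_norm_le he hC) (integrable_comp_of_norm_le hY.aemeasurable he hC)
  calc ∫ ω, ((Y ω : ℂ) - X ω) * e (X ω + Y ω) ∂μ
      = ∫ ω, (Y ω : ℂ) * e (Y ω) * e (X ω) - (X ω : ℂ) * e (X ω) * e (Y ω) ∂μ := by
        congr 1 with ω
        rw [he_add]
        ring
    _ = _ := by
        rw [integral_sub hYX hXY',
          hXY.symm.integral_ofReal_mul_comp_mul_comp hY.aemeasurable hX.aemeasurable he,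
          hXY.integral_ofReal_mul_comp_mul_comp hX.aemeasurable hY.aemeasurable he]

end BoundedCharacter

theorem charFun_derivative_identity_general {Ω : Type*} [MeasurableSpace Ω]
    (μ : Measure Ω) [IsProbabilityMeasure μ] (X0 X1 : Ω → ℝ)
    (hint0 : Integrable X0 μ) (hint1 : Integrable X1 μ)
    (hindep : IndepFun X0 X1 μ)
    (horth : ∀ h : ℝ → ℂ, Measurable h → (∃ C, ∀ x, ‖h x‖ ≤ C) →
      ∫ ω, ((X1 ω : ℂ) - (X0 ω : ℂ)) * h (X0 ω + X1 ω) ∂μ = 0) :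
    ∀ t : ℝ,
      (∫ ω, (X1 ω : ℂ) * Complex.exp ((t * X1 ω : ℝ) * Complex.I) ∂μ) *
          (∫ ω, Complex.exp ((t * X0 ω : ℝ) * Complex.I) ∂μ) =
        (∫ ω, (X0 ω : ℂ) * Complex.exp ((t * X0 ω : ℝ) * Complex.I) ∂μ) *
          (∫ ω, Complex.exp ((t * X1 ω : ℝ) * Complex.I) ∂μ) := by
  intro t
  set e : ℝ → ℂ := fun x ↦ Complex.exp ((t * x : ℝ) * Complex.I)
  have he : Measurable e := by fun_prop
  have he_norm : ∀ x, ‖e x‖ ≤ 1 := fun x ↦ (Complex.norm_exp_ofReal_mul_I _).le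
  have he_add : ∀ x y, e (x + y) = e x * e y := fun x y ↦ by
    simp only [e, ← Complex.exp_add]
    push_cast
    ring_nf
  rw [← sub_eq_zero, ← hindep.integral_sub_mul_comp_add hint0 hint1 he he_norm he_add]
  exact horth e he ⟨1, he_norm⟩

/-- If `X0, X1` are independent integrable real random variables and
`E[(X1 - X0) h(X0 + X1)] = 0` for every bounded measurable `h : ℝ → ℂ`, then for every `t`,
`E[X1 e^{itX1}] E[e^{itX0}] = E[X0 e^{itX0}] E[e^{itX1}]`. -/
theorem charFun_derivative_identity {Ω : Type*} [MeasurableSpace Ω]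
    (μ : Measure Ω) [IsProbabilityMeasure μ] (X0 X1 : Ω → ℝ)
    (h0 : Measurable X0) (h1 : Measurable X1)
    (hint0 : Integrable X0 μ) (hint1 : Integrable X1 μ)
    (hindep : IndepFun X0 X1 μ)
    (horth : ∀ h : ℝ → ℂ, Measurable h → (∃ C, ∀ x, ‖h x‖ ≤ C) →
      ∫ ω, ((X1 ω : ℂ) - (X0 ω : ℂ)) * h (X0 ω + X1 ω) ∂μ = 0) :
    ∀ t : ℝ,
      (∫ ω, (X1 ω : ℂ) * Complex.exp ((t * X1 ω : ℝ) * Complex.I) ∂μ) *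
          (∫ ω, Complex.exp ((t * X0 ω : ℝ) * Complex.I) ∂μ) =
        (∫ ω, (X0 ω : ℂ) * Complex.exp ((t * X0 ω : ℝ) * Complex.I) ∂μ) *
          (∫ ω, Complex.exp ((t * X1 ω : ℝ) * Complex.I) ∂μ) :=
  charFun_derivative_identity_general μ X0 X1 hint0 hint1 hindep horth
end

section
/- Let X0, X1 be independent integrable random vectors in R^d with laws mu_0, mu_1, and define the linear interpolant X_t = (1-t) X0 + t X1 with law rho_t. Let b_t(x) = E[X1 - X0 | X_t = x]. Then for every compactly supported smooth test function phi: R^d -> R and every t in (0,1), d/dt of the integral of phi with respect to rho_t equals the integral of <grad phi(x), b_t(x)> with respect to rho_t(dx); i.e. (rho_t, b_t) solve the continuity equation in the weak sense. -/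
open MeasureTheory ProbabilityTheory

section Aux

variable {Ω : Type*} {m m0 : MeasurableSpace Ω} {μ : Measure Ω}

/-- Conditional expectation commutes with continuous linear maps. -/
lemma condexp_clm_comm {E F : Type*} [NormedAddCommGroup E] [NormedSpace ℝ E] [CompleteSpace E]
    [NormedAddCommGroup F] [NormedSpace ℝ F] [CompleteSpace F]
    (hm : m ≤ m0) [SigmaFinite (μ.trim hm)] (T : E →L[ℝ] F) {Y : Ω → E}
    (hY : Integrable Y μ) :
    (fun ω => T ((μ[Y|m]) ω)) =ᵐ[μ] μ[fun ω => T (Y ω)|m] := by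
  refine ae_eq_condExp_of_forall_setIntegral_eq hm (T.integrable_comp hY) ?_ ?_ ?_
  · intro s _ _
    exact (T.integrable_comp integrable_condExp).integrableOn
  · intro s hs hμs
    rw [T.integral_comp_comm integrable_condExp.integrableOn,
      T.integral_comp_comm hY.integrableOn, setIntegral_condExp hm hY hs]
  · exact (T.continuous.comp_stronglyMeasurable
      (stronglyMeasurable_condExp (f := Y))).aestronglyMeasurable

lemma abs_coord_le_norm {d : ℕ} (x : EuclideanSpace ℝ (Fin d)) (i : Fin d) : |x i| ≤ ‖x‖ := by
  calc |x i| = Real.sqrt (‖x i‖^2) := by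
        rw [Real.sqrt_sq (norm_nonneg _), Real.norm_eq_abs]
  _ ≤ ‖x‖ := by
      rw [EuclideanSpace.norm_eq x]
      exact Real.sqrt_le_sqrt (Finset.single_le_sum (f := fun j => ‖x j‖^2)
        (fun j _ => by positivity) (Finset.mem_univ i))

lemma integral_inner_condexp {d : ℕ} (hm : m ≤ m0) [IsFiniteMeasure μ]
    {g : Ω → EuclideanSpace ℝ (Fin d)} (hg : StronglyMeasurable[m] g)
    {C : ℝ} (hC : ∀ ω, ‖g ω‖ ≤ C)
    {Y : Ω → EuclideanSpace ℝ (Fin d)} (hY : Integrable Y μ) :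
    ∫ ω, (inner ℝ (g ω) (Y ω) : ℝ) ∂μ = ∫ ω, (inner ℝ (g ω) ((μ[Y|m]) ω) : ℝ) ∂μ := by
  haveI : SigmaFinite (μ.trim hm) := by
    haveI : IsFiniteMeasure (μ.trim hm) := isFiniteMeasure_trim hm
    infer_instance
  have hgmeas : AEStronglyMeasurable g μ := (hg.mono hm).aestronglyMeasurable
  have hgi : ∀ i : Fin d, StronglyMeasurable[m] (fun ω => g ω i) := fun i =>
    (EuclideanSpace.proj (𝕜 := ℝ) i).continuous.comp_stronglyMeasurable hg
  have hgib : ∀ i : Fin d, ∃ c : ℝ, ∀ ω, ‖g ω i‖ ≤ c := fun i =>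
    ⟨C, fun ω => (abs_coord_le_norm (g ω) i).trans (hC ω)⟩
  have key : ∀ (Z : Ω → EuclideanSpace ℝ (Fin d)), Integrable Z μ →
      ∫ ω, (inner ℝ (g ω) (Z ω) : ℝ) ∂μ = ∑ i : Fin d, ∫ ω, g ω i * Z ω i ∂μ := by
    intro Z hZ
    simp_rw [PiLp.inner_apply, RCLike.inner_apply, starRingEnd_apply, star_trivial]
    refine (integral_congr_ae (Filter.Eventually.of_forall fun ω =>
      Finset.sum_congr rfl fun i _ => mul_comm _ _)).trans ?_
    exact integral_finset_sum _ fun i _ =>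
      ((EuclideanSpace.proj (𝕜 := ℝ) i).integrable_comp hZ).bdd_mul
        ((hgi i).mono hm).aestronglyMeasurable (Filter.Eventually.of_forall (hgib i).choose_spec)
  rw [key Y hY, key _ integrable_condExp]
  refine Finset.sum_congr rfl fun i _ => ?_
  have hYi : Integrable (fun ω => Y ω i) μ := (EuclideanSpace.proj (𝕜 := ℝ) i).integrable_comp hY
  have hmul : Integrable (fun ω => g ω i * Y ω i) μ :=
    hYi.bdd_mul ((hgi i).mono hm).aestronglyMeasurable (Filter.Eventually.of_forall (hgib i).choose_spec)
  calc ∫ ω, g ω i * Y ω i ∂μ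
      = ∫ ω, (μ[fun ω => g ω i * Y ω i|m]) ω ∂μ := (integral_condExp hm).symm
    _ = ∫ ω, g ω i * (μ[fun ω => Y ω i|m]) ω ∂μ := by
        refine integral_congr_ae ?_
        filter_upwards [condExp_mul_of_stronglyMeasurable_left (hgi i) hmul hYi] with ω hω using hω
    _ = ∫ ω, g ω i * (μ[Y|m]) ω i ∂μ := by
        refine integral_congr_ae ?_
        filter_upwards [condexp_clm_comm hm (EuclideanSpace.proj (𝕜 := ℝ) i) hY] with ω hω
        simp only [EuclideanSpace.proj, PiLp.proj_apply] at hω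
        rw [← hω]

lemma inner_gradient_eq_fderiv {F : Type*} [NormedAddCommGroup F] [InnerProductSpace ℝ F]
    [CompleteSpace F] (φ : F → ℝ) (x v : F) :
    (inner ℝ (gradient φ x) v : ℝ) = fderiv ℝ φ x v := by
  rw [gradient, InnerProductSpace.toDual_symm_apply]

end Aux

/-- For independent integrable `X0, X1` and `X_t = (1-t) X0 + t X1` with law
`ρ_t`, and `b_t` a measurable representative of `E[X1 - X0 | X_t = ·]`, the pair `(ρ_t, b_t)`
solves the continuity equation weakly: for every smooth compactly supported `φ` and
`t ∈ (0,1)`, `d/dt ∫ φ dρ_t = ∫ ⟪∇φ(x), b_t(x)⟫ dρ_t(x)`. -/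
theorem continuity_equation_weak {Ω : Type*} [MeasurableSpace Ω] (μ : Measure Ω)
    [IsProbabilityMeasure μ] {d : ℕ} (X0 X1 : Ω → EuclideanSpace ℝ (Fin d))
    (h0 : Measurable X0) (h1 : Measurable X1)
    (hint0 : Integrable X0 μ) (hint1 : Integrable X1 μ)
    (hindep : IndepFun X0 X1 μ)
    (b : ℝ → EuclideanSpace ℝ (Fin d) → EuclideanSpace ℝ (Fin d))
    (hbmeas : ∀ t ∈ Set.Ioo (0 : ℝ) 1, Measurable (b t))
    (hbrep : ∀ t ∈ Set.Ioo (0 : ℝ) 1,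
      μ[(fun ω => X1 ω - X0 ω) |
          MeasurableSpace.comap (fun ω => (1 - t) • X0 ω + t • X1 ω) inferInstance]
        =ᵐ[μ] fun ω => b t ((1 - t) • X0 ω + t • X1 ω))
    (φ : EuclideanSpace ℝ (Fin d) → ℝ) (hφ : ContDiff ℝ (⊤ : ℕ∞) φ)
    (hφsupp : HasCompactSupport φ) :
    ∀ t ∈ Set.Ioo (0 : ℝ) 1,
      HasDerivAt (fun s : ℝ => ∫ ω, φ ((1 - s) • X0 ω + s • X1 ω) ∂μ)
        (∫ x, (inner ℝ (gradient φ x) (b t x) : ℝ)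
          ∂(μ.map (fun ω => (1 - t) • X0 ω + t • X1 ω))) t := by
  intro t ht
  have hVmeas : Measurable (fun ω => X1 ω - X0 ω) := h1.sub h0
  have hVint : Integrable (fun ω => X1 ω - X0 ω) μ := hint1.sub hint0
  have hXs : ∀ s : ℝ, Measurable (fun ω => (1 - s) • X0 ω + s • X1 ω) := fun s =>
    ((h0.const_smul ((1:ℝ) - s)).add (h1.const_smul s) :)
  -- gradient facts
  have hφdiff : Differentiable ℝ φ := hφ.differentiable (by simp)
  have hgradcont : Continuous (gradient φ) := by
    have : Continuous (fderiv ℝ φ) := hφ.continuous_fderiv (by simp)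
    exact (InnerProductSpace.toDual ℝ (EuclideanSpace ℝ (Fin d))).symm.continuous.comp this
  have hgradsupp : HasCompactSupport (gradient φ) := by
    have := hφsupp.fderiv (𝕜 := ℝ)
    exact this.comp_left (g := (InnerProductSpace.toDual ℝ (EuclideanSpace ℝ (Fin d))).symm) (map_zero _)
  obtain ⟨C, hC⟩ := hgradsupp.exists_bound_of_continuous hgradcont
  obtain ⟨Cφ, hCφ⟩ := hφsupp.exists_bound_of_continuous hφ.continuous
  -- pointwise derivative
  have hderiv : ∀ (s : ℝ) (ω : Ω),
      HasDerivAt (fun s : ℝ => φ ((1 - s) • X0 ω + s • X1 ω))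
        (inner ℝ (gradient φ ((1 - s) • X0 ω + s • X1 ω)) ((X1 ω - X0 ω)) : ℝ) s := by
    intro s ω
    have heq : (fun s : ℝ => (1 - s) • X0 ω + s • X1 ω)
        = fun s : ℝ => X0 ω + s • (X1 ω - X0 ω) := by
      funext s; module
    have hlin : HasDerivAt (fun s : ℝ => (1 - s) • X0 ω + s • X1 ω) ((X1 ω - X0 ω)) s := by
      rw [heq]
      simpa using ((hasDerivAt_id s).smul_const ((X1 ω - X0 ω))).const_add (X0 ω)
    have := ((hφdiff _).hasFDerivAt).comp_hasDerivAt s hlin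
    rw [inner_gradient_eq_fderiv]
    exact this
  -- derivative under the integral
  have main := hasDerivAt_integral_of_dominated_loc_of_deriv_le (μ := μ)
    (F := fun s ω => φ ((1 - s) • X0 ω + s • X1 ω))
    (F' := fun s ω => (inner ℝ (gradient φ ((1 - s) • X0 ω + s • X1 ω)) ((X1 ω - X0 ω)) : ℝ))
    (x₀ := t) (bound := fun ω => C * ‖(X1 ω - X0 ω)‖) (Metric.ball_mem_nhds t one_pos)
    (Filter.Eventually.of_forall fun s =>
      (hφ.continuous.measurable.comp (hXs s)).aestronglyMeasurable)
    ((integrable_const Cφ).mono'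
      (hφ.continuous.measurable.comp (hXs t)).aestronglyMeasurable
      (Filter.Eventually.of_forall fun ω => by simpa using hCφ _))
    (((hgradcont.measurable.comp (hXs t)).inner hVmeas).aestronglyMeasurable)
    (Filter.Eventually.of_forall fun ω s _ =>
      (abs_real_inner_le_norm _ _).trans
        (mul_le_mul_of_nonneg_right (hC _) (norm_nonneg _)))
    (hVint.norm.const_mul C)
    (Filter.Eventually.of_forall fun ω s _ => hderiv s ω)
  refine main.2.congr_deriv ?_
  -- identify the derivative
  have hm : MeasurableSpace.comap (fun ω => (1 - t) • X0 ω + t • X1 ω)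
      inferInstance ≤ ‹MeasurableSpace Ω› := (hXs t).comap_le
  have hXtm : Measurable[MeasurableSpace.comap (fun ω => (1 - t) • X0 ω + t • X1 ω)
      inferInstance] (fun ω => (1 - t) • X0 ω + t • X1 ω) :=
    Measurable.of_comap_le le_rfl
  have hgm : StronglyMeasurable[MeasurableSpace.comap
      (fun ω => (1 - t) • X0 ω + t • X1 ω) inferInstance]
      (fun ω => gradient φ ((1 - t) • X0 ω + t • X1 ω)) :=
    (hgradcont.measurable.comp hXtm).stronglyMeasurable
  calc ∫ ω, (inner ℝ (gradient φ ((1 - t) • X0 ω + t • X1 ω)) (X1 ω - X0 ω) : ℝ) ∂μ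
      = ∫ ω, (inner ℝ (gradient φ ((1 - t) • X0 ω + t • X1 ω))
          ((μ[fun ω => X1 ω - X0 ω|MeasurableSpace.comap
            (fun ω => (1 - t) • X0 ω + t • X1 ω) inferInstance]) ω) : ℝ) ∂μ :=
        integral_inner_condexp hm hgm (fun ω => hC _) hVint
    _ = ∫ ω, (inner ℝ (gradient φ ((1 - t) • X0 ω + t • X1 ω))
          (b t ((1 - t) • X0 ω + t • X1 ω)) : ℝ) ∂μ := by
        refine integral_congr_ae ?_
        filter_upwards [hbrep t ht] with ω hω
        rw [hω]
    _ = ∫ x, (inner ℝ (gradient φ x) (b t x) : ℝ)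
          ∂(μ.map (fun ω => (1 - t) • X0 ω + t • X1 ω)) :=
        (integral_map (f := fun x => (inner ℝ (gradient φ x) (b t x) : ℝ))
          (hXs t).aemeasurable
          (hgradcont.measurable.inner (hbmeas t ht)).aestronglyMeasurable).symm
end

section
/- Let U, V be independent integrable real random variables with nowhere-vanishing characteristic functions such that E[V - U | U + V] = 0 almost surely. Then for all real t, the logarithmic derivatives of their characteristic functions agree: phi_U'(t)/phi_U(t) = phi_V'(t)/phi_V(t), and consequently phi_U = phi_V. -/
open MeasureTheory ProbabilityTheory Complex

/-! The hypothesis makes `V - U` orthogonal to every bounded function of `U + V`. Testing it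
against `exp (i t (U + V))` and factorising by independence gives
`E[V e^{itV}] φ_U(t) = E[U e^{itU}] φ_V(t)`, that is `φ_V' φ_U = φ_U' φ_V`. So the logarithmic
derivatives agree, `φ_U / φ_V` is constant, and it equals `1` at `t = 0`. -/

theorem eq_of_logDeriv_eq {𝕜 𝕜' : Type*} [NontriviallyNormedField 𝕜] [IsRCLikeNormedField 𝕜]
    [NontriviallyNormedField 𝕜'] [NormedAlgebra 𝕜 𝕜'] {f g : 𝕜 → 𝕜'} (hf : Differentiable 𝕜 f)
    (hg : Differentiable 𝕜 g) (hf0 : ∀ x, f x ≠ 0) (hg0 : ∀ x, g x ≠ 0)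
    (h : logDeriv f = logDeriv g) {x₀ : 𝕜} (hx₀ : f x₀ = g x₀) : f = g := by
  obtain ⟨z, -, hz⟩ := (logDeriv_eqOn_iff hf.differentiableOn hg.differentiableOn isOpen_univ
    isPreconnected_univ (fun x _ ↦ hg0 x) (fun x _ ↦ hf0 x)).mp fun x _ ↦ congrFun h x
  have hz1 : z = 1 := by
    have := hz (Set.mem_univ x₀)
    rw [hx₀, Pi.smul_apply, smul_eq_mul] at this
    exact (mul_eq_right₀ (hg0 x₀)).mp this.symm
  ext x
  simpa [hz1] using hz (Set.mem_univ x)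

section CondExp

variable {Ω E : Type*} {m mΩ : MeasurableSpace Ω} {μ : Measure Ω}
  [NormedAddCommGroup E] [NormedSpace ℝ E] [CompleteSpace E]

theorem integral_smul_eq_zero_of_condExp_eq_zero [IsFiniteMeasure μ] (hm : m ≤ mΩ)
    {X : Ω → ℝ} {g : Ω → E} (hX : Integrable X μ) (hX0 : μ[X | m] =ᵐ[μ] 0)
    (hg : StronglyMeasurable[m] g) (c : ℝ) (hgc : ∀ᵐ ω ∂μ, ‖g ω‖ ≤ c) :
    ∫ ω, X ω • g ω ∂μ = 0 := by
  have hpull := condExp_stronglyMeasurable_bilin_of_bound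
    (ContinuousLinearMap.lsmul ℝ ℝ : ℝ →L[ℝ] E →L[ℝ] E).flip hm hg hX c hgc
  calc ∫ ω, X ω • g ω ∂μ = ∫ ω, μ[fun ω ↦ X ω • g ω | m] ω ∂μ := (integral_condExp hm).symm
    _ = ∫ ω, μ[X | m] ω • g ω ∂μ := integral_congr_ae (by simpa using hpull)
    _ = 0 := integral_eq_zero_of_ae <| by filter_upwards [hX0] with ω hω; simp [hω]

end CondExp

section CharFun

variable {Ω : Type*} {mΩ : MeasurableSpace Ω} {μ : Measure Ω}

theorem hasDerivAt_charFun {ν : Measure ℝ} [IsFiniteMeasure ν] (hν : Integrable id ν) (t : ℝ) :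
    HasDerivAt (charFun ν) (I * ∫ x, x * exp (t * x * I) ∂ν) t := by
  have hmem : MemLp id (1 : ℕ) ν := by simpa using memLp_one_iff_integrable.mpr hν
  have hdiff : Differentiable ℝ (charFun ν) :=
    (contDiff_charFun hmem).differentiable one_ne_zero
  have h := (hdiff t).hasDerivAt
  rw [← iteratedDeriv_one, iteratedDeriv_charFun hmem] at h
  simpa using h

theorem integral_exp_mul_I_eq_charFun_map {X : Ω → ℝ} (hX : AEMeasurable X μ) (t : ℝ) :
    ∫ ω, exp ((t * X ω : ℝ) * I) ∂μ = charFun (μ.map X) t := by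
  rw [charFun_apply_real, integral_map hX (by fun_prop)]
  push_cast
  rfl

theorem hasDerivAt_integral_exp_mul_I [IsFiniteMeasure μ] {X : Ω → ℝ} (hX : Integrable X μ)
    (t : ℝ) :
    HasDerivAt (fun s : ℝ ↦ ∫ ω, exp ((s * X ω : ℝ) * I) ∂μ)
      (I * ∫ ω, X ω * exp ((t * X ω : ℝ) * I) ∂μ) t := by
  have hmap : Integrable id (μ.map X) :=
    (integrable_map_measure (by fun_prop) hX.aemeasurable).mpr hX
  rw [funext (integral_exp_mul_I_eq_charFun_map hX.aemeasurable)]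
  convert hasDerivAt_charFun hmap t using 2
  rw [integral_map hX.aemeasurable (by fun_prop)]
  push_cast
  rfl

theorem integrable_ofReal_mul_exp_mul_I {X S : Ω → ℝ} (hX : Integrable X μ)
    (hS : AEMeasurable S μ) : Integrable (fun ω ↦ (X ω : ℂ) * exp ((S ω : ℝ) * I)) μ :=
  hX.ofReal.mul_bdd (by fun_prop) (c := 1) (.of_forall fun ω ↦ by simp [norm_exp_ofReal_mul_I])

theorem ProbabilityTheory.IndepFun.integral_mul_exp_add_mul_I {X Y : Ω → ℝ} (hXY : X ⟂ᵢ[μ] Y)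
    (hX : AEMeasurable X μ) (hY : AEMeasurable Y μ) (t : ℝ) :
    ∫ ω, (Y ω : ℂ) * exp ((t * (X ω + Y ω) : ℝ) * I) ∂μ =
      (∫ ω, exp ((t * X ω : ℝ) * I) ∂μ) * ∫ ω, (Y ω : ℂ) * exp ((t * Y ω : ℝ) * I) ∂μ := by
  rw [← hXY.integral_fun_comp_mul_comp hX hY (f := fun x : ℝ ↦ exp ((t * x : ℝ) * I))
    (g := fun y : ℝ ↦ (y : ℂ) * exp ((t * y : ℝ) * I)) (by fun_prop) (by fun_prop)]
  congr 1 with ω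
  rw [mul_add, ofReal_add, add_mul, exp_add]
  ring

theorem ProbabilityTheory.IndepFun.integral_mul_exp_mul_integral_exp_eq [IsFiniteMeasure μ]
    {U V : Ω → ℝ} (hU : Measurable U) (hV : Measurable V) (hUint : Integrable U μ)
    (hVint : Integrable V μ) (hindep : U ⟂ᵢ[μ] V)
    (hzero : μ[fun ω ↦ V ω - U ω | MeasurableSpace.comap (fun ω ↦ U ω + V ω) inferInstance]
      =ᵐ[μ] 0) (t : ℝ) :
    (∫ ω, (V ω : ℂ) * exp ((t * V ω : ℝ) * I) ∂μ) * ∫ ω, exp ((t * U ω : ℝ) * I) ∂μ =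
      (∫ ω, (U ω : ℂ) * exp ((t * U ω : ℝ) * I) ∂μ) * ∫ ω, exp ((t * V ω : ℝ) * I) ∂μ := by
  have horth := integral_smul_eq_zero_of_condExp_eq_zero (hU.add hV).comap_le
    (hVint.sub hUint) hzero (X := fun ω ↦ V ω - U ω)
    (g := fun ω ↦ exp ((t * (U ω + V ω) : ℝ) * I))
    ((by fun_prop : Measurable fun x : ℝ ↦ exp ((t * x : ℝ) * I)).comp
      (comap_measurable _)).stronglyMeasurable 1 (.of_forall fun ω ↦ (norm_exp_ofReal_mul_I _).le)
  have hsplit : ∫ ω, (V ω - U ω) • exp ((t * (U ω + V ω) : ℝ) * I) ∂μ =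
      ∫ ω, (V ω : ℂ) * exp ((t * (U ω + V ω) : ℝ) * I) ∂μ -
        ∫ ω, (U ω : ℂ) * exp ((t * (V ω + U ω) : ℝ) * I) ∂μ := by
    rw [← integral_sub (integrable_ofReal_mul_exp_mul_I hVint (by fun_prop))
      (integrable_ofReal_mul_exp_mul_I hUint (by fun_prop))]
    congr 1 with ω
    rw [add_comm (V ω), real_smul, ofReal_sub, sub_mul]
  rw [hsplit, hindep.integral_mul_exp_add_mul_I hU.aemeasurable hV.aemeasurable,
    hindep.symm.integral_mul_exp_add_mul_I hV.aemeasurable hU.aemeasurable] at horth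
  linear_combination horth

end CharFun

/-- For independent integrable real `U, V` with nowhere-vanishing
characteristic functions and `E[V - U | U + V] = 0` a.s., the logarithmic derivatives
of the characteristic functions agree everywhere, and consequently `φ_U = φ_V`. -/
theorem log_deriv_charFun_eq {Ω : Type*} [MeasurableSpace Ω] (μ : Measure Ω)
    [IsProbabilityMeasure μ] (U V : Ω → ℝ)
    (hU : Measurable U) (hV : Measurable V)
    (hUint : Integrable U μ) (hVint : Integrable V μ)
    (hindep : IndepFun U V μ)
    (hcU : ∀ t : ℝ, (∫ ω, Complex.exp ((t * U ω : ℝ) * Complex.I) ∂μ) ≠ 0)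
    (hcV : ∀ t : ℝ, (∫ ω, Complex.exp ((t * V ω : ℝ) * Complex.I) ∂μ) ≠ 0)
    (hzero : μ[(fun ω => V ω - U ω) |
        MeasurableSpace.comap (fun ω => U ω + V ω) inferInstance] =ᵐ[μ] 0) :
    (∀ t : ℝ,
      deriv (fun s : ℝ => ∫ ω, Complex.exp ((s * U ω : ℝ) * Complex.I) ∂μ) t /
          (∫ ω, Complex.exp ((t * U ω : ℝ) * Complex.I) ∂μ) =
        deriv (fun s : ℝ => ∫ ω, Complex.exp ((s * V ω : ℝ) * Complex.I) ∂μ) t /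
          (∫ ω, Complex.exp ((t * V ω : ℝ) * Complex.I) ∂μ)) ∧
      (fun t : ℝ => ∫ ω, Complex.exp ((t * U ω : ℝ) * Complex.I) ∂μ) =
        (fun t : ℝ => ∫ ω, Complex.exp ((t * V ω : ℝ) * Complex.I) ∂μ) := by
  set φU : ℝ → ℂ := fun s ↦ ∫ ω, exp ((s * U ω : ℝ) * I) ∂μ
  set φV : ℝ → ℂ := fun s ↦ ∫ ω, exp ((s * V ω : ℝ) * I) ∂μ
  have hφU : ∀ t, HasDerivAt φU _ t := hasDerivAt_integral_exp_mul_I hUint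
  have hφV : ∀ t, HasDerivAt φV _ t := hasDerivAt_integral_exp_mul_I hVint
  have hlog : logDeriv φU = logDeriv φV := funext fun t ↦ by
    rw [logDeriv_apply, logDeriv_apply, (hφU t).deriv, (hφV t).deriv,
      div_eq_div_iff (hcU t) (hcV t)]
    linear_combination -I * hindep.integral_mul_exp_mul_integral_exp_eq hU hV hUint hVint hzero t
  refine ⟨congrFun hlog, eq_of_logDeriv_eq (fun t ↦ (hφU t).differentiableAt)
    (fun t ↦ (hφV t).differentiableAt) hcU hcV hlog (x₀ := 0) ?_⟩
  simp [φU, φV]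
end
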